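/- arXiv:1006.2603 — 9 statements merged into one kernel-verified Lean document; each statement's English description precedes it below -/
import Mathlib

section
/- If the diagonal entries D_1, …, D_n are pairwise distinct, then for every eigenvalue λ of A = D + J the associated eigenspace {W ∈ ℂⁿ : A W = λ W} has dimension exactly 1; in fact it is spanned by the vector W with components W_j = 1/(λ − D_j). -/
/-!
Componentwise, `(D + J) W = λ W` reads `(λ - D_i) W_i = ∑_j W_j` for every `i`. If `λ = D_j`
for some `j`, the common value `∑_j W_j` vanishes, and injectivity of `D` then forces `W = 0`.
So an eigenvalue differs from every `D_j`, every eigenvector is `(∑_j W_j) • (1 / (λ - D_j))_j`,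
and the given eigenvector shows that this line lies in the eigenspace.
-/

open Matrix Module

namespace Matrix

variable {ι K : Type*} [Fintype ι]

theorem diagonal_add_of_one_mulVec_apply [DecidableEq ι] [CommRing K] (D W : ι → K) (i : ι) :
    ((diagonal D + of fun _ _ => (1 : K)) *ᵥ W) i = D i * W i + ∑ j, W j := by
  simp [mulVec, dotProduct, diagonal_apply, add_mul, Finset.sum_add_distrib]

theorem diagonal_add_of_one_mulVec_eq_smul_iff [DecidableEq ι] [CommRing K] (D W : ι → K)
    (lam : K) :
    (diagonal D + of fun _ _ => (1 : K)) *ᵥ W = lam • W ↔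
      ∀ i, (lam - D i) * W i = ∑ j, W j := by
  simp only [funext_iff, diagonal_add_of_one_mulVec_apply, Pi.smul_apply, smul_eq_mul]
  refine forall_congr' fun i => ?_
  constructor <;> intro h <;> linear_combination -h

variable [Field K] {D W : ι → K} {lam : K}

theorem sub_ne_zero_of_sub_mul_eq_sum (hD : Function.Injective D) (hW : W ≠ 0)
    (h : ∀ i, (lam - D i) * W i = ∑ j, W j) (j : ι) : lam - D j ≠ 0 := by
  intro hj
  have hsum : ∑ k, W k = 0 := by rw [← h j, hj, zero_mul]
  have hoff : ∀ i, i ≠ j → W i = 0 := fun i hi =>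
    (mul_eq_zero.mp ((h i).trans hsum)).resolve_left fun hi' =>
      hi (hD (sub_eq_zero.mp hi' ▸ sub_eq_zero.mp hj))
  have hon : W j = 0 := by
    rwa [Finset.sum_eq_single j (fun k _ hk => hoff k hk) (by simp)] at hsum
  refine hW (funext fun i => ?_)
  by_cases hi : i = j
  · exact hi ▸ hon
  · exact hoff i hi

theorem eq_sum_smul_of_sub_mul_eq_sum (hne : ∀ j, lam - D j ≠ 0)
    (h : ∀ i, (lam - D i) * W i = ∑ j, W j) :
    W = (∑ j, W j) • fun j => (lam - D j)⁻¹ := by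
  funext i
  rw [Pi.smul_apply, smul_eq_mul, ← h i, mul_comm, inv_mul_cancel_left₀ (hne i)]

theorem eigenspace_diagonal_add_of_one [DecidableEq ι] (hD : Function.Injective D) (hW : W ≠ 0)
    (hEig : (diagonal D + of fun _ _ => (1 : K)) *ᵥ W = lam • W) :
    End.eigenspace (toLin' (diagonal D + of fun _ _ => (1 : K))) lam =
      Submodule.span K {fun j => (lam - D j)⁻¹} := by
  have mem_iff : ∀ V, V ∈ End.eigenspace (toLin' (diagonal D + of fun _ _ => (1 : K))) lam ↔
      ∀ i, (lam - D i) * V i = ∑ j, V j := fun V => by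
    rw [End.mem_eigenspace_iff, toLin'_apply, diagonal_add_of_one_mulVec_eq_smul_iff]
  have hW_sum := (diagonal_add_of_one_mulVec_eq_smul_iff D W lam).mp hEig
  have hne := sub_ne_zero_of_sub_mul_eq_sum hD hW hW_sum
  have hW_eq := eq_sum_smul_of_sub_mul_eq_sum hne hW_sum
  have hsum : ∑ j, W j ≠ 0 := fun h0 => hW (by rw [hW_eq, h0, zero_smul])
  apply le_antisymm
  · intro V hV
    rw [eq_sum_smul_of_sub_mul_eq_sum hne ((mem_iff V).mp hV)]
    exact Submodule.smul_mem _ _ (Submodule.mem_span_singleton_self _)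
  · rw [← Submodule.span_singleton_smul_eq (IsUnit.mk0 _ hsum), ← hW_eq,
      Submodule.span_singleton_le_iff_mem, mem_iff]
    exact hW_sum

end Matrix

theorem stmt2_general (p : ℕ) (D : Fin (2*p) → ℂ)
    (hD : Function.Injective D) (lam : ℂ)
    (hlam : ∃ W : Fin (2*p) → ℂ, W ≠ 0 ∧
      (Matrix.diagonal D + Matrix.of fun _ _ => (1 : ℂ)).mulVec W = lam • W) :
    Module.End.eigenspace
        (Matrix.toLin' (Matrix.diagonal D + Matrix.of fun _ _ => (1 : ℂ))) lam
      = Submodule.span ℂ {fun j => (lam - D j)⁻¹} ∧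
    Module.finrank ℂ
      (Module.End.eigenspace
        (Matrix.toLin' (Matrix.diagonal D + Matrix.of fun _ _ => (1 : ℂ))) lam) = 1 := by
  obtain ⟨W, hW, hEig⟩ := hlam
  have heq := eigenspace_diagonal_add_of_one hD hW hEig
  have hv : (fun j => (lam - D j)⁻¹) ≠ 0 := by
    rw [Ne, ← Submodule.span_singleton_eq_bot (R := ℂ), ← heq]
    exact End.hasEigenvalue_of_hasEigenvector ⟨(End.mem_eigenspace_iff.mpr hEig), hW⟩
  exact ⟨heq, heq ▸ finrank_span_singleton hv⟩

/-- If the diagonal entries are pairwise distinct, the eigenspace of `A = D + J` associated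
with any eigenvalue `λ` is one-dimensional, spanned by the vector `W_j = 1/(λ − D_j)`. -/
theorem stmt2 (p : ℕ) (hp : 1 ≤ p) (D : Fin (2*p) → ℂ)
    (hD : Function.Injective D) (lam : ℂ)
    (hlam : ∃ W : Fin (2*p) → ℂ, W ≠ 0 ∧
      (Matrix.diagonal D + Matrix.of fun _ _ => (1 : ℂ)).mulVec W = lam • W) :
    Module.End.eigenspace
        (Matrix.toLin' (Matrix.diagonal D + Matrix.of fun _ _ => (1 : ℂ))) lam
      = Submodule.span ℂ {fun j => (lam - D j)⁻¹} ∧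
    Module.finrank ℂ
      (Module.End.eigenspace
        (Matrix.toLin' (Matrix.diagonal D + Matrix.of fun _ _ => (1 : ℂ))) lam) = 1 :=
  stmt2_general p D hD lam hlam
end

section
/- Assume the diagonal entries D_1, …, D_n are pairwise distinct and satisfy conj(D_j) = D_{n+1−j} for all j = 1, …, p. Then every eigenvalue of A = D + J is either real, or lies in the union over j = 1, …, p of the closed disks in ℂ with center Re(D_j) and radius |Im(D_j)| (the disks having the segments [D_j, conj(D_j)] as diameters). -/
/-!
If `W` is an eigenvector for `λ` and `s = ∑ W_j`, the rows of `(D + J) W = λ W` read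
`(λ - D_i) W_i = s`. If `s = 0` then `λ = D_i` for some `i`, and `D_i` lies on the boundary of
its own disk or of that of its conjugate partner. Otherwise `∑ (λ - D_i)⁻¹ = 1`. Grouping the
terms in conjugate pairs, `(λ - d)⁻¹ + (λ - conj d)⁻¹` has imaginary part of sign opposite to
`Im λ` as soon as `λ` lies outside the disk with diameter `[d, conj d]`; so a non-real `λ` outside
all disks would give the sum a nonzero imaginary part.
-/

open Matrix Finset ComplexConjugate

namespace Complex

lemma norm_sub_ofReal_re (z : ℂ) : ‖z - z.re‖ = |z.im| := by
  have : z - z.re = z.im * I := by apply ext <;> simp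
  rw [this, norm_mul, norm_I, norm_real, Real.norm_eq_abs, mul_one]

lemma norm_conj_sub_ofReal_re (z : ℂ) : ‖conj z - z.re‖ = |z.im| := by
  rw [← norm_sub_ofReal_re, ← norm_conj (z - _), map_sub, conj_ofReal]

lemma im_mul_im_inv_sub_add_inv_sub_conj_neg {z d : ℂ} (hz : z.im ≠ 0)
    (hd : |d.im| < ‖z - d.re‖) : z.im * ((z - d)⁻¹ + (z - conj d)⁻¹).im < 0 := by
  have hN₁ : 0 < normSq (z - d) := normSq_pos.2 fun h => by
    rw [sub_eq_zero.mp h, norm_sub_ofReal_re] at hd; exact hd.false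
  have hN₂ : 0 < normSq (z - conj d) := normSq_pos.2 fun h => by
    rw [sub_eq_zero.mp h, norm_conj_sub_ofReal_re] at hd; exact hd.false
  have hb : d.im ^ 2 < (z.re - d.re) ^ 2 + z.im ^ 2 := by
    have := pow_lt_pow_left₀ hd (abs_nonneg _) two_ne_zero
    rwa [sq_abs, Complex.sq_norm, normSq_apply, sub_re, sub_im, ofReal_re, ofReal_im, sub_zero,
      ← sq, ← sq] at this
  have hy : 0 < z.im ^ 2 := by positivity
  rw [add_im, inv_im, inv_im, div_add_div _ _ hN₁.ne' hN₂.ne', mul_div_assoc']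
  refine div_neg_of_neg_of_pos ?_ (mul_pos hN₁ hN₂)
  simp only [normSq_apply, sub_re, sub_im, conj_re, conj_im]
  -- the numerator is `-2 (Im z)² (|z - Re d|² - (Im d)²)`
  nlinarith [mul_pos hy (sub_pos.2 hb)]

end Complex

section DiagonalPlusOnes

variable {K ι : Type*} [Field K] [Fintype ι] [DecidableEq ι] {D W : ι → K} {μ : K}

lemma diagonal_add_ones_mulVec_apply (D W : ι → K) (i : ι) :
    ((diagonal D + of fun _ _ => (1 : K)) *ᵥ W) i = D i * W i + ∑ j, W j := by
  rw [add_mulVec, Pi.add_apply, mulVec_diagonal]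
  simp [mulVec, dotProduct]

lemma mul_add_sum_eq_of_mulVec_eq_smul (h : (diagonal D + of fun _ _ => (1 : K)) *ᵥ W = μ • W)
    (i : ι) : D i * W i + ∑ j, W j = μ * W i := by
  simpa [diagonal_add_ones_mulVec_apply] using congrFun h i

lemma exists_eq_of_mulVec_eq_smul_of_sum_eq_zero
    (h : (diagonal D + of fun _ _ => (1 : K)) *ᵥ W = μ • W) (hW : W ≠ 0) (hs : ∑ j, W j = 0) :
    ∃ i, μ = D i := by
  obtain ⟨i, hi⟩ := Function.ne_iff.mp hW
  refine ⟨i, mul_right_cancel₀ hi ?_⟩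
  simpa [hs] using (mul_add_sum_eq_of_mulVec_eq_smul h i).symm

lemma sum_inv_sub_eq_one_of_mulVec_eq_smul
    (h : (diagonal D + of fun _ _ => (1 : K)) *ᵥ W = μ • W) (hs : ∑ j, W j ≠ 0) :
    ∑ i, (μ - D i)⁻¹ = 1 := by
  set s := ∑ j, W j
  have hW : ∀ i, W i = s * (μ - D i)⁻¹ := fun i => by
    have hrow := mul_add_sum_eq_of_mulVec_eq_smul h i
    have hne : μ - D i ≠ 0 := fun h0 => hs (by linear_combination hrow + W i * h0)
    field_simp
    linear_combination -hrow
  apply mul_left_cancel₀ hs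
  rw [mul_sum, ← sum_congr rfl fun i _ => hW i, mul_one]

end DiagonalPlusOnes

lemma Fin.sum_eq_sum_lt_add_rev {M : Type*} [AddCommMonoid M] (p : ℕ) (f : Fin (2 * p) → M) :
    ∑ i, f i = ∑ i : Fin (2 * p) with i.val < p, (f i + f i.rev) := by
  rw [sum_add_distrib, ← sum_filter_add_sum_filter_not univ (fun i : Fin (2 * p) => (i : ℕ) < p)]
  congr 1
  apply sum_nbij' Fin.rev Fin.rev <;> intro a ha
  · simp only [mem_filter, mem_univ, true_and, not_lt, Fin.val_rev] at ha ⊢; omega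
  · simp only [mem_filter, mem_univ, true_and, not_lt, Fin.val_rev] at ha ⊢; omega
  all_goals simp

section ConjugateSymmetric

variable {p : ℕ} {D : Fin (2 * p) → ℂ}

lemma exists_norm_sub_re_le_of_conj_eq_rev
    (hsym : ∀ j : Fin (2 * p), (j : ℕ) < p → conj (D j) = D j.rev) (i : Fin (2 * p)) :
    ∃ j : Fin (2 * p), (j : ℕ) < p ∧ ‖D i - ((D j).re : ℂ)‖ ≤ |(D j).im| := by
  rcases lt_or_ge (i : ℕ) p with hi | hi
  · exact ⟨i, hi, (Complex.norm_sub_ofReal_re _).le⟩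
  · have hrev : (i.rev : ℕ) < p := by rw [Fin.val_rev]; omega
    refine ⟨i.rev, hrev, ?_⟩
    rw [← Fin.rev_rev i, ← hsym i.rev hrev, Fin.rev_rev, Complex.norm_conj_sub_ofReal_re]

lemma im_mul_im_sum_inv_sub_neg (hp : 1 ≤ p)
    (hsym : ∀ j : Fin (2 * p), (j : ℕ) < p → conj (D j) = D j.rev) {z : ℂ} (hz : z.im ≠ 0)
    (hout : ∀ j : Fin (2 * p), (j : ℕ) < p → |(D j).im| < ‖z - (D j).re‖) :
    z.im * (∑ i, (z - D i)⁻¹).im < 0 := by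
  rw [Complex.im_sum, Fin.sum_eq_sum_lt_add_rev, mul_sum]
  refine sum_neg (fun i hi => ?_) ⟨⟨0, by omega⟩, by simp; omega⟩
  rw [mem_filter] at hi
  rw [← Complex.add_im, ← hsym i hi.2]
  exact Complex.im_mul_im_inv_sub_add_inv_sub_conj_neg hz (hout i hi.2)

end ConjugateSymmetric

theorem stmt5_general (p : ℕ) (hp : 1 ≤ p) (D : Fin (2*p) → ℂ)
    (hsym : ∀ j : Fin (2*p), (j : ℕ) < p → (starRingEnd ℂ) (D j) = D j.rev)
    (lam : ℂ)
    (hlam : ∃ W : Fin (2*p) → ℂ, W ≠ 0 ∧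
      (Matrix.diagonal D + Matrix.of fun _ _ => (1 : ℂ)).mulVec W = lam • W) :
    lam.im = 0 ∨ ∃ j : Fin (2*p), (j : ℕ) < p ∧
      ‖lam - ((D j).re : ℂ)‖ ≤ |(D j).im| := by
  obtain ⟨W, hW0, hW⟩ := hlam
  by_cases hs : ∑ j, W j = 0
  · obtain ⟨i, rfl⟩ := exists_eq_of_mulVec_eq_smul_of_sum_eq_zero hW hW0 hs
    exact Or.inr (exists_norm_sub_re_le_of_conj_eq_rev hsym i)
  · by_contra! hout
    have hneg := im_mul_im_sum_inv_sub_neg hp hsym hout.1 hout.2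
    rw [sum_inv_sub_eq_one_of_mulVec_eq_smul hW hs, Complex.one_im, mul_zero] at hneg
    exact hneg.false

/-- If the diagonal entries are pairwise distinct and satisfy `conj(D_j) = D_{n+1−j}` for
`j = 1, …, p` (here `n = 2p` and, in `Fin (2*p)` indexing, `D (j.rev) = conj (D j)` for
`j < p`), then every eigenvalue of `A = D + J` is either real or lies in one of the closed
disks with center `Re(D_j)` and radius `|Im(D_j)|`, `j = 1, …, p`. -/
theorem stmt5 (p : ℕ) (hp : 1 ≤ p) (D : Fin (2*p) → ℂ)
    (hD : Function.Injective D)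
    (hsym : ∀ j : Fin (2*p), (j : ℕ) < p → (starRingEnd ℂ) (D j) = D j.rev)
    (lam : ℂ)
    (hlam : ∃ W : Fin (2*p) → ℂ, W ≠ 0 ∧
      (Matrix.diagonal D + Matrix.of fun _ _ => (1 : ℂ)).mulVec W = lam • W) :
    lam.im = 0 ∨ ∃ j : Fin (2*p), (j : ℕ) < p ∧
      ‖lam - ((D j).re : ℂ)‖ ≤ |(D j).im| :=
  stmt5_general p hp D hsym lam hlam
end

section
/- Let ε > 0. If λ ∈ ℝ is a real eigenvalue of A_ε = εD + J, then λ > ε·min_{1≤j≤p} α_j. -/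
/-!
Write `J` for the all-ones matrix and `S = ∑ W` for an eigenvector `W` of `diagonal d + J` with
eigenvalue `μ`. Componentwise, `(μ - d k) W k = S`. If `S = 0`, every nonzero coordinate of `W`
forces `μ = d k`, so by distinctness of the `d k` the vector `W` has a single nonzero coordinate,
which is then `S`: a contradiction. Hence `S ≠ 0`, and dividing by `S` gives the secular equation
`∑ (μ - d k)⁻¹ = 1`. For a real `λ ≤ ε min α` every `λ - ε d k` has nonpositive real part, hence so
does its inverse, which is incompatible with the secular equation.
-/

/-- The diagonal vector `(α_p − iβ_p, …, α_1 − iβ_1, α_1 + iβ_1, …, α_p + iβ_p)`, indexed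
by `Fin p ⊕ Fin p` (the order of the diagonal entries is immaterial for spectral purposes). -/
noncomputable def stmt7Dvec {p : ℕ} (α β : Fin p → ℝ) : Fin p ⊕ Fin p → ℂ :=
  Sum.elim (fun j => (α j : ℂ) - Complex.I * (β j : ℂ))
    (fun j => (α j : ℂ) + Complex.I * (β j : ℂ))

open Matrix

namespace Matrix

variable {ι K : Type*} [Fintype ι] [DecidableEq ι] [Field K]

theorem diagonal_add_ones_mulVec_apply (d W : ι → K) (k : ι) :
    ((diagonal d + of fun _ _ => (1 : K)) *ᵥ W) k = d k * W k + ∑ i, W i := by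
  rw [add_mulVec, Pi.add_apply, mulVec_diagonal]
  simp [mulVec, dotProduct]

variable {d : ι → K} {μ : K} {W : ι → K}

theorem sub_mul_eq_sum_of_diagonal_add_ones_mulVec_eq
    (h : (diagonal d + of fun _ _ => (1 : K)) *ᵥ W = μ • W) (k : ι) :
    (μ - d k) * W k = ∑ i, W i := by
  have hk := congrFun h k
  rw [diagonal_add_ones_mulVec_apply, Pi.smul_apply, smul_eq_mul] at hk
  linear_combination -hk

theorem sum_ne_zero_of_diagonal_add_ones_mulVec_eq (hd : Function.Injective d) (hW : W ≠ 0)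
    (h : (diagonal d + of fun _ _ => (1 : K)) *ᵥ W = μ • W) :
    ∑ i, W i ≠ 0 := by
  intro hS
  have hcomp := sub_mul_eq_sum_of_diagonal_add_ones_mulVec_eq h
  have heq : ∀ k, W k ≠ 0 → μ = d k := fun k hk =>
    sub_eq_zero.mp ((mul_eq_zero.mp ((hcomp k).trans hS)).resolve_right hk)
  obtain ⟨k₀, hk₀⟩ := Function.ne_iff.mp hW
  have hsingle : ∑ i, W i = W k₀ := Finset.sum_eq_single k₀
    (fun k _ hne => by_contra fun hk => hne (hd ((heq k hk).symm.trans (heq k₀ hk₀))))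
    (by simp)
  exact hk₀ (hsingle ▸ hS)

theorem sum_inv_sub_eq_one_of_diagonal_add_ones_mulVec_eq (hd : Function.Injective d)
    (hW : W ≠ 0) (h : (diagonal d + of fun _ _ => (1 : K)) *ᵥ W = μ • W) :
    ∑ k, (μ - d k)⁻¹ = 1 := by
  have hS := sum_ne_zero_of_diagonal_add_ones_mulVec_eq hd hW h
  have hcomp := sub_mul_eq_sum_of_diagonal_add_ones_mulVec_eq h
  have hne : ∀ k, μ - d k ≠ 0 := fun k hk => hS (by rw [← hcomp k, hk, zero_mul])
  have hW_eq : ∀ k, W k = (∑ i, W i) * (μ - d k)⁻¹ := fun k => by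
    rw [← hcomp k, mul_comm, inv_mul_cancel_left₀ (hne k)]
  refine mul_left_cancel₀ hS ?_
  rw [mul_one, Finset.mul_sum]
  exact (Finset.sum_congr rfl fun k _ => hW_eq k).symm

end Matrix

theorem Complex.exists_re_lt_of_sum_inv_sub_eq_one {ι : Type*} [Fintype ι] {z : ι → ℂ} {μ : ℂ}
    (h : ∑ k, (μ - z k)⁻¹ = 1) : ∃ k, (z k).re < μ.re := by
  by_contra! hle
  have hre : (∑ k, (μ - z k)⁻¹).re ≤ 0 := by
    rw [Complex.re_sum]
    refine Finset.sum_nonpos fun k _ => ?_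
    rw [Complex.inv_re, Complex.sub_re]
    exact div_nonpos_of_nonpos_of_nonneg (sub_nonpos.mpr (hle k)) (Complex.normSq_nonneg _)
  rw [h, Complex.one_re] at hre
  exact absurd hre one_pos.not_ge

theorem stmt7Dvec_re {p : ℕ} (α β : Fin p → ℝ) (k : Fin p ⊕ Fin p) :
    (stmt7Dvec α β k).re = Sum.elim α α k := by
  rcases k with j | j <;> simp [stmt7Dvec]

/-- If `λ ∈ ℝ` is a real eigenvalue of `A_ε = εD + J` (with `ε > 0` and pairwise distinct
diagonal entries), then `λ > ε · min_j α_j`. -/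
theorem stmt7 (p : ℕ) (hp : 1 ≤ p) (α β : Fin p → ℝ)
    (hD : Function.Injective (stmt7Dvec α β)) (ε : ℝ) (hε : 0 < ε) (lam : ℝ)
    (hlam : ∃ W : Fin p ⊕ Fin p → ℂ, W ≠ 0 ∧
      ((ε : ℂ) • Matrix.diagonal (stmt7Dvec α β)
        + Matrix.of fun _ _ => (1 : ℂ)).mulVec W = (lam : ℂ) • W) :
    lam > ε * Finset.univ.inf'
      (Finset.univ_nonempty_iff.mpr (Fin.pos_iff_nonempty.mp hp)) α := by
  obtain ⟨W, hW, hWeig⟩ := hlam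
  rw [← diagonal_smul] at hWeig
  have hεD : Function.Injective ((ε : ℂ) • stmt7Dvec α β) :=
    (mul_right_injective₀ (Complex.ofReal_ne_zero.mpr hε.ne')).comp hD
  obtain ⟨k, hk⟩ := Complex.exists_re_lt_of_sum_inv_sub_eq_one
    (sum_inv_sub_eq_one_of_diagonal_add_ones_mulVec_eq hεD hW hWeig)
  simp only [Pi.smul_apply, smul_eq_mul, Complex.re_ofReal_mul, stmt7Dvec_re,
    Complex.ofReal_re] at hk
  refine lt_of_le_of_lt (mul_le_mul_of_nonneg_left ?_ hε.le) hk
  rcases k with j | j <;> exact Finset.inf'_le α (Finset.mem_univ j)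
end

section
/- Let ε > 0 and define h(ε, y) = 2·∑_{j=1}^{p} (y − εα_j) / ((y − εα_j)² + ε²β_j²) for y ∈ ℝ. Then the function y ↦ h(ε, y) is strictly decreasing on the interval (ε·max_{1≤j≤p}(α_j + |β_j|), ∞). -/
open Finset Set

theorem StrictAntiOn.finset_sum {ι α M : Type*} [Preorder α] [AddCommMonoid M] [PartialOrder M]
    [IsOrderedCancelAddMonoid M] {s : Finset ι} (hs : s.Nonempty) {f : ι → α → M} {D : Set α}
    (hf : ∀ i ∈ s, StrictAntiOn (f i) D) :
    StrictAntiOn (fun x => ∑ i ∈ s, f i x) D :=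
  fun _ hx _ hy hxy => sum_lt_sum_of_nonempty hs fun i hi => hf i hi hx hy hxy

theorem strictAntiOn_div_sq_add_sq (c : ℝ) :
    StrictAntiOn (fun t : ℝ => t / (t ^ 2 + c ^ 2)) (Ioi |c|) := by
  intro s (hs : |c| < s) t (ht : |c| < t) hst
  have hc : 0 ≤ |c| := abs_nonneg c
  -- `s / (s² + c²) > t / (t² + c²)` amounts to `(t - s) (s t - c²) > 0`.
  have hcst : c ^ 2 < s * t := by
    rw [← sq_abs]
    nlinarith
  have hs0 : 0 < s := hc.trans_lt hs
  have ht0 : 0 < t := hs0.trans hst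
  rw [div_lt_div_iff₀ (by positivity) (by positivity)]
  nlinarith

theorem strictAntiOn_sub_div_sq_add_sq (a c : ℝ) :
    StrictAntiOn (fun y : ℝ => (y - a) / ((y - a) ^ 2 + c ^ 2)) (Ioi (a + |c|)) :=
  fun _ hx _ hy hxy => strictAntiOn_div_sq_add_sq c
    (mem_Ioi.mpr (lt_sub_iff_add_lt'.mpr hx)) (mem_Ioi.mpr (lt_sub_iff_add_lt'.mpr hy))
    (sub_lt_sub_right hxy a)

/-- For fixed `ε > 0`, the function
`y ↦ h(ε,y) = 2 ∑_{j=1}^p (y − εα_j)/((y − εα_j)² + ε²β_j²)` is strictly decreasing on the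
interval `(ε · max_j (α_j + |β_j|), ∞)`. -/
theorem stmt8 (p : ℕ) (hp : 1 ≤ p) (α β : Fin p → ℝ) (ε : ℝ) (hε : 0 < ε) :
    StrictAntiOn
      (fun y : ℝ => 2 * ∑ j, (y - ε * α j) / ((y - ε * α j) ^ 2 + ε ^ 2 * (β j) ^ 2))
      (Set.Ioi (ε * Finset.univ.sup'
        (Finset.univ_nonempty_iff.mpr (Fin.pos_iff_nonempty.mp hp))
        (fun j => α j + |β j|))) := by
  set hne := Finset.univ_nonempty_iff.mpr (Fin.pos_iff_nonempty.mp hp)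
  have hterm : ∀ j ∈ (univ : Finset (Fin p)),
      StrictAntiOn (fun y : ℝ => (y - ε * α j) / ((y - ε * α j) ^ 2 + ε ^ 2 * β j ^ 2))
        (Ioi (ε * univ.sup' hne fun j => α j + |β j|)) := by
    intro j hj
    have hbound : ε * α j + |ε * β j| ≤ ε * univ.sup' hne fun j => α j + |β j| := by
      rw [abs_mul, abs_of_pos hε, ← mul_add]
      exact mul_le_mul_of_nonneg_left (le_sup' (fun j => α j + |β j|) hj) hε.le
    simpa only [mul_pow] using
      (strictAntiOn_sub_div_sq_add_sq (ε * α j) (ε * β j)).mono (Ioi_subset_Ioi hbound)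
  intro x hx y hy hxy
  exact mul_lt_mul_of_pos_left (StrictAntiOn.finset_sum hne hterm hx hy hxy) two_pos
end

section
/- Let ε > 0. Then the matrix A_ε = εD + J has at most one real eigenvalue in the open interval (ε·max_{1≤j≤p}(α_j + |β_j|), ∞). -/
/-!
An eigenvector `W` of `diag(d) + J` for an eigenvalue `μ` outside the diagonal satisfies
`(μ - d k) W k = ∑ W`, which forces the secular equation `∑ₖ (μ - d k)⁻¹ = 1`. Two distinct
solutions `μ₁ ≠ μ₂` would give `∑ₖ ((μ₁ - d k)(μ₂ - d k))⁻¹ = 0`. But if `μ₁, μ₂` are real and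
lie to the right of every `d k` by more than `|Im (d k)|`, each factor `(μ - d k)` lies in the
open sector `|arg| < π/4`, so every term of that sum lies in the right half-plane.
-/

open Complex Matrix Finset

/-- The diagonal vector `(α_p − iβ_p, …, α_1 − iβ_1, α_1 + iβ_1, …, α_p + iβ_p)`, indexed
by `Fin p ⊕ Fin p` (the order of the diagonal entries is immaterial for spectral purposes). -/
noncomputable def stmt10Dvec {p : ℕ} (α β : Fin p → ℝ) : Fin p ⊕ Fin p → ℂ :=
  Sum.elim (fun j => (α j : ℂ) - Complex.I * (β j : ℂ))
    (fun j => (α j : ℂ) + Complex.I * (β j : ℂ))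

theorem Matrix.sum_inv_sub_eq_one_of_diagonal_add_ones_mulVec {n K : Type*} [Fintype n]
    [DecidableEq n] [Field K] {d W : n → K} {μ : K} (hW : W ≠ 0) (hμ : ∀ k, μ ≠ d k)
    (h : (diagonal d + of fun _ _ => (1 : K)) *ᵥ W = μ • W) :
    ∑ k, (μ - d k)⁻¹ = 1 := by
  set s := ∑ j, W j
  have hμ' : ∀ k, μ - d k ≠ 0 := fun k => sub_ne_zero.mpr (hμ k)
  have hrow : ∀ k, W k = s * (μ - d k)⁻¹ := fun k => by
    have hk := congrFun h k
    rw [add_mulVec, Pi.add_apply, mulVec_diagonal] at hk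
    simp only [mulVec, dotProduct, of_apply, one_mul, Pi.smul_apply, smul_eq_mul] at hk
    rw [eq_mul_inv_iff_mul_eq₀ (hμ' k)]
    linear_combination -hk
  have hs : s ≠ 0 := fun hs => hW <| funext fun k => by simp [hrow k, hs]
  apply mul_left_cancel₀ hs
  calc s * ∑ k, (μ - d k)⁻¹ = ∑ k, W k := by simp only [mul_sum, hrow]
    _ = s * 1 := (mul_one s).symm

theorem Complex.ne_of_abs_im_lt_sub_re {z : ℂ} {μ : ℝ} (h : |z.im| < μ - z.re) : (μ : ℂ) ≠ z :=
  fun hz => by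
    have := congrArg re hz
    simp only [ofReal_re] at this
    linarith [abs_nonneg z.im]

theorem Complex.re_inv_mul_sub_pos {z : ℂ} {μ₁ μ₂ : ℝ} (h₁ : |z.im| < μ₁ - z.re)
    (h₂ : |z.im| < μ₂ - z.re) : 0 < (((μ₁ - z) * (μ₂ - z))⁻¹).re := by
  have hre : 0 < ((μ₁ - z) * (μ₂ - z)).re := by
    have hsq : z.im * z.im = |z.im| * |z.im| := (abs_mul_abs_self _).symm
    simp only [mul_re, sub_re, sub_im, ofReal_re, ofReal_im, zero_sub, neg_mul_neg, hsq]
    nlinarith [abs_nonneg z.im]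
  rw [inv_re]
  exact div_pos hre (normSq_pos.mpr fun h0 => by simp [h0] at hre)

theorem Matrix.eq_of_diagonal_add_ones_eigenvalues {n : Type*} [Fintype n] [DecidableEq n]
    [Nonempty n] {d : n → ℂ} {μ₁ μ₂ : ℝ}
    (h₁ : ∀ k, |(d k).im| < μ₁ - (d k).re) (h₂ : ∀ k, |(d k).im| < μ₂ - (d k).re)
    (he₁ : ∃ W, W ≠ 0 ∧ (diagonal d + of fun _ _ => (1 : ℂ)) *ᵥ W = (μ₁ : ℂ) • W)
    (he₂ : ∃ W, W ≠ 0 ∧ (diagonal d + of fun _ _ => (1 : ℂ)) *ᵥ W = (μ₂ : ℂ) • W) :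
    μ₁ = μ₂ := by
  obtain ⟨W₁, hW₁, hE₁⟩ := he₁
  obtain ⟨W₂, hW₂, hE₂⟩ := he₂
  have hne₁ k : (μ₁ : ℂ) ≠ d k := ne_of_abs_im_lt_sub_re (h₁ k)
  have hne₂ k : (μ₂ : ℂ) ≠ d k := ne_of_abs_im_lt_sub_re (h₂ k)
  have hsec₁ := sum_inv_sub_eq_one_of_diagonal_add_ones_mulVec hW₁ hne₁ hE₁
  have hsec₂ := sum_inv_sub_eq_one_of_diagonal_add_ones_mulVec hW₂ hne₂ hE₂
  by_contra hμ
  have hdiff : (μ₂ : ℂ) - μ₁ ≠ 0 := sub_ne_zero.mpr (by exact_mod_cast Ne.symm hμ)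
  have hsum : ∑ k, (((μ₁ : ℂ) - d k) * (μ₂ - d k))⁻¹ = 0 := by
    have h0 : ∑ k, (((μ₁ : ℂ) - d k)⁻¹ - (μ₂ - d k)⁻¹) = 0 := by
      rw [sum_sub_distrib, hsec₁, hsec₂, sub_self]
    simp only [fun k => _root_.inv_sub_inv (sub_ne_zero.mpr (hne₁ k))
      (sub_ne_zero.mpr (hne₂ k)), sub_sub_sub_cancel_right,
      div_eq_mul_inv, ← mul_sum] at h0
    exact (mul_eq_zero.mp h0).resolve_left hdiff
  have hpos : 0 < (∑ k, (((μ₁ : ℂ) - d k) * (μ₂ - d k))⁻¹).re := by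
    rw [re_sum]
    exact sum_pos (fun k _ => re_inv_mul_sub_pos (h₁ k) (h₂ k)) univ_nonempty
  rw [hsum, zero_re] at hpos
  exact hpos.false

theorem abs_im_smul_stmt10Dvec_lt {p : ℕ} {α β : Fin p → ℝ} {ε μ : ℝ} (hε : 0 < ε)
    (hμ : ∀ j, ε * (α j + |β j|) < μ) (k : Fin p ⊕ Fin p) :
    |(ε • stmt10Dvec α β k).im| < μ - (ε • stmt10Dvec α β k).re := by
  rcases k with j | j <;>
  · simp only [stmt10Dvec, Sum.elim_inl, Sum.elim_inr, real_smul, mul_re, mul_im, ofReal_re,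
      ofReal_im, sub_re, sub_im, add_re, add_im, I_re, I_im]
    simp only [zero_mul, one_mul, zero_sub, sub_zero, add_zero, zero_add, mul_zero,
      abs_mul, abs_neg, abs_of_pos hε]
    linarith [hμ j]

theorem stmt10_general (p : ℕ) (hp : 1 ≤ p) (α β : Fin p → ℝ)
    (ε : ℝ) (hε : 0 < ε)
    (lam₁ lam₂ : ℝ)
    (h₁ : lam₁ ∈ Set.Ioi (ε * Finset.univ.sup'
      (Finset.univ_nonempty_iff.mpr (Fin.pos_iff_nonempty.mp hp)) (fun j => α j + |β j|)))
    (h₂ : lam₂ ∈ Set.Ioi (ε * Finset.univ.sup'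
      (Finset.univ_nonempty_iff.mpr (Fin.pos_iff_nonempty.mp hp)) (fun j => α j + |β j|)))
    (he₁ : ∃ W : Fin p ⊕ Fin p → ℂ, W ≠ 0 ∧
      ((ε : ℂ) • Matrix.diagonal (stmt10Dvec α β)
        + Matrix.of fun _ _ => (1 : ℂ)).mulVec W = (lam₁ : ℂ) • W)
    (he₂ : ∃ W : Fin p ⊕ Fin p → ℂ, W ≠ 0 ∧
      ((ε : ℂ) • Matrix.diagonal (stmt10Dvec α β)
        + Matrix.of fun _ _ => (1 : ℂ)).mulVec W = (lam₂ : ℂ) • W) :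
    lam₁ = lam₂ := by
  have : Nonempty (Fin p ⊕ Fin p) := ⟨.inl ⟨0, hp⟩⟩
  have hdiag : (ε : ℂ) • diagonal (stmt10Dvec α β) = diagonal (ε • stmt10Dvec α β) := by
    rw [← diagonal_smul]
    rfl
  rw [hdiag] at he₁ he₂
  have hbound {H : (univ : Finset (Fin p)).Nonempty} {μ : ℝ}
      (hμ : ε * univ.sup' H (fun j => α j + |β j|) < μ) j :
      ε * (α j + |β j|) < μ :=
    (mul_le_mul_of_nonneg_left (le_sup' (fun j => α j + |β j|) (mem_univ j)) hε.le).trans_lt hμ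
  exact eq_of_diagonal_add_ones_eigenvalues (abs_im_smul_stmt10Dvec_lt hε (hbound h₁))
    (abs_im_smul_stmt10Dvec_lt hε (hbound h₂)) he₁ he₂

/-- For `ε > 0`, the matrix `A_ε = εD + J` has at most one real eigenvalue in the open
interval `(ε · max_j (α_j + |β_j|), ∞)`. -/
theorem stmt10 (p : ℕ) (hp : 1 ≤ p) (α β : Fin p → ℝ)
    (hD : Function.Injective (stmt10Dvec α β)) (ε : ℝ) (hε : 0 < ε)
    (lam₁ lam₂ : ℝ)
    (h₁ : lam₁ ∈ Set.Ioi (ε * Finset.univ.sup'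
      (Finset.univ_nonempty_iff.mpr (Fin.pos_iff_nonempty.mp hp)) (fun j => α j + |β j|)))
    (h₂ : lam₂ ∈ Set.Ioi (ε * Finset.univ.sup'
      (Finset.univ_nonempty_iff.mpr (Fin.pos_iff_nonempty.mp hp)) (fun j => α j + |β j|)))
    (he₁ : ∃ W : Fin p ⊕ Fin p → ℂ, W ≠ 0 ∧
      ((ε : ℂ) • Matrix.diagonal (stmt10Dvec α β)
        + Matrix.of fun _ _ => (1 : ℂ)).mulVec W = (lam₁ : ℂ) • W)
    (he₂ : ∃ W : Fin p ⊕ Fin p → ℂ, W ≠ 0 ∧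
      ((ε : ℂ) • Matrix.diagonal (stmt10Dvec α β)
        + Matrix.of fun _ _ => (1 : ℂ)).mulVec W = (lam₂ : ℂ) • W) :
    lam₁ = lam₂ :=
  stmt10_general p hp α β ε hε lam₁ lam₂ h₁ h₂ he₁ he₂
end

section
/- Let ε > 0, δt > 0, and consider the amplification matrix A_{δt} = (1 − δt/ε²)·I_{n} + (δt/(2p·ε²))·(J + εD). Then every non-real eigenvalue of A_{δt} lies in the closed disk in ℂ with center 1 − δt/ε² and radius (δt/(2p·ε))·max_{1≤j≤p}(|α_j| + |β_j|). -/
/-!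
Writing `z = c + s μ` for the centre `c = 1 - δt/ε²` and scale `s = δt/(2pε²)`, `μ` is an
eigenvalue of `J + εD`. For an eigenvector `W` with `σ = ∑ W ≠ 0` the eigen-equations give
`W_k = σ / (μ - ε d_k)`, hence the secular equation `∑_k 1 / (μ - ε d_k) = 1`. The `ε d_k` come
in conjugate pairs `a ± ib`, and for non-real `μ` the imaginary part of the pair contribution
`1/(μ - a - ib) + 1/(μ - a + ib)` is `-2 Im μ (|μ - a|² - b²)` divided by a positive number.
All these have the same sign unless `|μ - a| ≤ |b|` for some pair, so the vanishing imaginary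
part of the secular equation puts `μ` in one of the disks `|μ - εα_j| ≤ ε|β_j|`, whence
`|μ| ≤ ε (|α_j| + |β_j|)`. If `σ = 0`, then `μ` is itself some `ε d_k`, which lies on the
boundary of such a disk.
-/

/-- The diagonal vector `(α_p − iβ_p, …, α_1 − iβ_1, α_1 + iβ_1, …, α_p + iβ_p)`, indexed
by `Fin p ⊕ Fin p` (the order of the diagonal entries is immaterial for spectral purposes). -/
noncomputable def stmt13Dvec {p : ℕ} (α β : Fin p → ℝ) : Fin p ⊕ Fin p → ℂ :=
  Sum.elim (fun j => (α j : ℂ) - Complex.I * (β j : ℂ))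
    (fun j => (α j : ℂ) + Complex.I * (β j : ℂ))

open ComplexConjugate Matrix

lemma Matrix.mulVec_eq_smul_of_smul_one_add_smul_mulVec_eq {n K : Type*} [Fintype n]
    [DecidableEq n] [Field K] {B : Matrix n n K} {a s z : K} {W : n → K} (hs : s ≠ 0)
    (h : (a • 1 + s • B) *ᵥ W = z • W) : B *ᵥ W = ((z - a) / s) • W := by
  rw [add_mulVec, smul_mulVec, smul_mulVec, one_mulVec] at h
  ext k
  have hk := congrFun h k
  simp only [Pi.add_apply, Pi.smul_apply, smul_eq_mul] at hk ⊢
  field_simp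
  linear_combination hk

lemma Matrix.exists_eq_or_sum_inv_sub_eq_one_of_allOnes_add_diagonal_mulVec_eq
    {ι K : Type*} [Fintype ι] [DecidableEq ι] [Field K] {d : ι → K} {μ : K} {W : ι → K}
    (hW : W ≠ 0) (h : (of (fun _ _ => (1 : K)) + diagonal d) *ᵥ W = μ • W) :
    (∃ k, μ = d k) ∨ ∑ k, (μ - d k)⁻¹ = 1 := by
  have hk : ∀ k, ∑ i, W i = (μ - d k) * W k := fun k => by
    have := congrFun h k
    rw [add_mulVec, Pi.add_apply, mulVec_diagonal] at this
    simp only [mulVec, dotProduct, of_apply, one_mul, Pi.smul_apply, smul_eq_mul] at this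
    linear_combination this
  by_cases hσ : ∑ i, W i = 0
  · obtain ⟨k, hWk⟩ := Function.ne_iff.mp hW
    exact .inl ⟨k, sub_eq_zero.1 <| (mul_eq_zero.1 ((hk k).symm.trans hσ)).resolve_right hWk⟩
  · have hne : ∀ k, μ - d k ≠ 0 := fun k h0 => hσ (by rw [hk k, h0, zero_mul])
    refine .inr (mul_left_cancel₀ hσ ?_)
    calc (∑ i, W i) * ∑ k, (μ - d k)⁻¹ = ∑ k, W k := by
          rw [Finset.mul_sum]
          exact Finset.sum_congr rfl fun k _ => by rw [hk k, mul_comm, inv_mul_cancel_left₀ (hne k)]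
      _ = (∑ i, W i) * 1 := (mul_one _).symm

namespace Complex

lemma norm_sub_re (c : ℂ) : ‖c - c.re‖ = |c.im| := by
  rw [norm_eq_sqrt_sq_add_sq]
  simp [Real.sqrt_sq_eq_abs]

lemma norm_conj_sub_re (c : ℂ) : ‖conj c - c.re‖ = |c.im| := by
  rw [← norm_sub_re, ← norm_conj]
  simp

lemma norm_le_abs_re_add_abs_im_of_norm_sub_re_le {μ c : ℂ} (h : ‖μ - c.re‖ ≤ |c.im|) :
    ‖μ‖ ≤ |c.re| + |c.im| := calc
  ‖μ‖ ≤ ‖μ - c.re‖ + ‖(c.re : ℂ)‖ := norm_le_norm_sub_add _ _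
  _ ≤ |c.im| + |c.re| := by rw [norm_real, Real.norm_eq_abs]; gcongr
  _ = |c.re| + |c.im| := add_comm _ _

lemma im_inv_sub_add_inv_sub_conj {μ c : ℂ} (h₁ : μ ≠ c) (h₂ : μ ≠ conj c) :
    ((μ - c)⁻¹ + (μ - conj c)⁻¹).im =
      -2 * μ.im * (normSq (μ - c.re) - c.im ^ 2) / (normSq (μ - c) * normSq (μ - conj c)) := by
  have h₁' := normSq_pos.2 (sub_ne_zero.2 h₁)
  have h₂' := normSq_pos.2 (sub_ne_zero.2 h₂)
  rw [add_im, inv_im, inv_im, div_add_div _ _ h₁'.ne' h₂'.ne']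
  congr 1
  simp only [normSq_apply, sub_re, sub_im, conj_re, conj_im, ofReal_re, ofReal_im]
  ring

lemma exists_norm_sub_re_le_abs_im_of_im_sum_inv_sub_add_inv_sub_conj_eq_zero {κ : Type*}
    [Fintype κ] [Nonempty κ] (c : κ → ℂ) {μ : ℂ} (hμ : μ.im ≠ 0)
    (hsum : (∑ j, ((μ - c j)⁻¹ + (μ - conj (c j))⁻¹)).im = 0) :
    ∃ j, ‖μ - (c j).re‖ ≤ |(c j).im| := by
  by_contra! h
  have hne : ∀ j, μ ≠ c j := fun j hμc => by simpa [hμc, norm_sub_re] using h j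
  have hne' : ∀ j, μ ≠ conj (c j) := fun j hμc => by simpa [hμc, norm_conj_sub_re] using h j
  have hpos : 0 < ∑ j, (normSq (μ - (c j).re) - (c j).im ^ 2)
      / (normSq (μ - c j) * normSq (μ - conj (c j))) := by
    refine Finset.sum_pos (fun j _ => div_pos ?_ ?_) Finset.univ_nonempty
    · rw [sub_pos, ← Complex.sq_norm, ← sq_abs (c j).im]
      exact pow_lt_pow_left₀ (h j) (abs_nonneg _) two_ne_zero
    · exact mul_pos (normSq_pos.2 (sub_ne_zero.2 (hne j))) (normSq_pos.2 (sub_ne_zero.2 (hne' j)))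
  rw [im_sum, Finset.sum_congr rfl fun j _ => im_inv_sub_add_inv_sub_conj (hne j) (hne' j)]
    at hsum
  simp_rw [mul_div_assoc] at hsum
  rw [← Finset.mul_sum] at hsum
  exact mul_ne_zero (mul_ne_zero (by norm_num) hμ) hpos.ne' hsum

lemma exists_norm_sub_re_le_abs_im_of_allOnes_add_diagonal_mulVec_eq {κ : Type*} [Fintype κ]
    [DecidableEq κ] [Nonempty κ] (c : κ → ℂ) {μ : ℂ} (hμ : μ.im ≠ 0) {W : κ ⊕ κ → ℂ}
    (hW : W ≠ 0)
    (h : (of (fun _ _ => (1 : ℂ)) + diagonal (Sum.elim (conj ∘ c) c)) *ᵥ W = μ • W) :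
    ∃ j, ‖μ - (c j).re‖ ≤ |(c j).im| := by
  rcases exists_eq_or_sum_inv_sub_eq_one_of_allOnes_add_diagonal_mulVec_eq hW h with
    ⟨k | k, hk⟩ | hsum
  · exact ⟨k, by rw [hk]; exact (norm_conj_sub_re _).le⟩
  · exact ⟨k, by rw [hk]; exact (norm_sub_re _).le⟩
  · refine exists_norm_sub_re_le_abs_im_of_im_sum_inv_sub_add_inv_sub_conj_eq_zero c hμ ?_
    rw [Fintype.sum_sum_type, add_comm] at hsum
    rw [Finset.sum_add_distrib]
    simpa using congrArg im hsum

end Complex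

theorem stmt13_general (p : ℕ) (hp : 1 ≤ p) (α β : Fin p → ℝ)
    (ε δt : ℝ) (hε : 0 < ε) (hδt : 0 < δt)
    (z : ℂ) (hz : z.im ≠ 0)
    (hzeig : ∃ W : Fin p ⊕ Fin p → ℂ, W ≠ 0 ∧
      (((1 - δt / ε ^ 2 : ℝ) : ℂ) • (1 : Matrix (Fin p ⊕ Fin p) (Fin p ⊕ Fin p) ℂ)
        + ((δt / (2 * p * ε ^ 2) : ℝ) : ℂ) •
          ((Matrix.of fun _ _ => (1 : ℂ))
            + (ε : ℂ) • Matrix.diagonal (stmt13Dvec α β))).mulVec W = z • W) :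
    ‖z - ((1 - δt / ε ^ 2 : ℝ) : ℂ)‖
      ≤ δt / (2 * p * ε) * Finset.univ.sup'
          (Finset.univ_nonempty_iff.mpr (Fin.pos_iff_nonempty.mp hp))
          (fun j => |α j| + |β j|) := by
  obtain ⟨W, hW, hAW⟩ := hzeig
  have : Nonempty (Fin p) := Fin.pos_iff_nonempty.mp hp
  set M := Finset.univ.sup' _ (fun j => |α j| + |β j|)
  set s := δt / (2 * p * ε ^ 2)
  have hs : 0 < s := by positivity
  set μ := (z - ((1 - δt / ε ^ 2 : ℝ) : ℂ)) / (s : ℂ)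
  let c : Fin p → ℂ := fun j => ε * stmt13Dvec α β (Sum.inr j)
  have hdiag : (ε : ℂ) • stmt13Dvec α β = Sum.elim (conj ∘ c) c := by
    ext (j | j) <;> simp [c, stmt13Dvec, sub_eq_add_neg]
  have hB := mulVec_eq_smul_of_smul_one_add_smul_mulVec_eq (Complex.ofReal_ne_zero.2 hs.ne') hAW
  rw [← diagonal_smul, hdiag] at hB
  have hμ : μ.im ≠ 0 := by
    rw [Complex.div_ofReal_im, Complex.sub_im, Complex.ofReal_im, sub_zero]
    exact div_ne_zero hz hs.ne'
  obtain ⟨j, hj⟩ :=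
    Complex.exists_norm_sub_re_le_abs_im_of_allOnes_add_diagonal_mulVec_eq c hμ hW hB
  have hμM : ‖μ‖ ≤ ε * M := calc
    ‖μ‖ ≤ |(c j).re| + |(c j).im| := Complex.norm_le_abs_re_add_abs_im_of_norm_sub_re_le hj
    _ = ε * (|α j| + |β j|) := by simp [c, stmt13Dvec, abs_mul, abs_of_pos hε]; ring
    _ ≤ ε * M := by gcongr; exact Finset.le_sup' (fun j => |α j| + |β j|) (Finset.mem_univ j)
  calc ‖z - ((1 - δt / ε ^ 2 : ℝ) : ℂ)‖ = s * ‖μ‖ := by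
        rw [← abs_of_pos hs, ← Real.norm_eq_abs, ← Complex.norm_real, ← norm_mul,
          mul_div_cancel₀ _ (Complex.ofReal_ne_zero.2 hs.ne')]
    _ ≤ s * (ε * M) := by gcongr
    _ = δt / (2 * p * ε) * M := by simp only [s]; field_simp

/-- Every non-real eigenvalue of the amplification matrix
`A_{δt} = (1 − δt/ε²) I + (δt/(2p ε²)) (J + εD)` lies in the closed disk with center
`1 − δt/ε²` and radius `(δt/(2pε)) max_j (|α_j| + |β_j|)`. -/
theorem stmt13 (p : ℕ) (hp : 1 ≤ p) (α β : Fin p → ℝ)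
    (hD : Function.Injective (stmt13Dvec α β)) (ε δt : ℝ) (hε : 0 < ε) (hδt : 0 < δt)
    (z : ℂ) (hz : z.im ≠ 0)
    (hzeig : ∃ W : Fin p ⊕ Fin p → ℂ, W ≠ 0 ∧
      (((1 - δt / ε ^ 2 : ℝ) : ℂ) • (1 : Matrix (Fin p ⊕ Fin p) (Fin p ⊕ Fin p) ℂ)
        + ((δt / (2 * p * ε ^ 2) : ℝ) : ℂ) •
          ((Matrix.of fun _ _ => (1 : ℂ))
            + (ε : ℂ) • Matrix.diagonal (stmt13Dvec α β))).mulVec W = z • W) :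
    ‖z - ((1 - δt / ε ^ 2 : ℝ) : ℂ)‖
      ≤ δt / (2 * p * ε) * Finset.univ.sup'
          (Finset.univ_nonempty_iff.mpr (Fin.pos_iff_nonempty.mp hp))
          (fun j => |α j| + |β j|) :=
  stmt13_general p hp α β ε δt hε hδt z hz hzeig
end

section
/- Let S be an m×m complex matrix, K ∈ ℕ, and M ∈ ℂ. Define the projective forward Euler step by f ↦ S^{K+1} f + M·(S^{K+1} f − S^{K} f) for f ∈ ℂ^m. Then this step equals multiplication by the matrix T = ((1 + M)·S − M·I)·S^{K}, and the spectrum of T is exactly the set {((1 + M)·λ − M)·λ^{K} : λ an eigenvalue of S}. In particular, the projective forward Euler method is stable (all its amplification factors lie in the closed unit disk) if and only if |((1 + M)·λ − M)·λ^{K}| ≤ 1 for every eigenvalue λ of S. -/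
/-! The step matrix is `p(S)` for the amplification polynomial `p(x) = ((1 + M)x - M)xᴷ`, so its
spectrum is `p(σ(S))` by the spectral mapping theorem for polynomials over the algebraically
closed field `ℂ`; the stability criterion is this equality read pointwise. -/

open Polynomial

section SpectralMapping

variable {𝕜 A : Type*} [Field 𝕜] [IsAlgClosed 𝕜] [Ring A] [Algebra 𝕜 A] [FiniteDimensional 𝕜 A]

/-- Unlike `spectrum.map_polynomial_aeval_of_nonempty`, no side condition is needed: the spectrum
is nonempty when `A` is nontrivial, and both sides are empty otherwise. -/
theorem spectrum.map_polynomial_aeval_of_finiteDimensional (a : A) (p : 𝕜[X]) :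
    spectrum 𝕜 (aeval a p) = (fun k => eval k p) '' spectrum 𝕜 a := by
  rcases subsingleton_or_nontrivial A with _ | _
  · simp [spectrum.of_subsingleton]
  · exact spectrum.map_polynomial_aeval_of_nonempty a p
      (spectrum.nonempty_of_isAlgClosed_of_finiteDimensional 𝕜 a)

end SpectralMapping

section ProjectiveEuler

variable {R A : Type*} [CommRing R] [Ring A] [Algebra R A]

noncomputable def projEulerPoly (K : ℕ) (M : R) : R[X] :=
  (C (1 + M) * X - C M) * X ^ K

theorem eval_projEulerPoly (K : ℕ) (M l : R) :
    eval l (projEulerPoly K M) = ((1 + M) * l - M) * l ^ K := by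
  simp [projEulerPoly]

theorem aeval_projEulerPoly (S : A) (K : ℕ) (M : R) :
    aeval S (projEulerPoly K M) = ((1 + M) • S - M • (1 : A)) * S ^ K := by
  simp [projEulerPoly, Algebra.algebraMap_eq_smul_one, add_mul, add_smul]

theorem projEuler_step_eq (S : A) (K : ℕ) (M : R) :
    ((1 + M) • S - M • (1 : A)) * S ^ K = S ^ (K + 1) + M • (S ^ (K + 1) - S ^ K) := by
  simp only [sub_mul, add_smul, smul_mul_assoc, one_mul, one_smul, smul_sub, add_mul, ← pow_succ']
  abel

end ProjectiveEuler

/-- The projective forward Euler step `f ↦ S^{K+1} f + M (S^{K+1} f − S^K f)` is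
multiplication by `T = ((1+M) S − M I) S^K`; the spectrum of `T` is the image of the
spectrum of `S` under `λ ↦ ((1+M)λ − M) λ^K`; hence the method is stable (all amplification
factors in the closed unit disk) iff `|((1+M)λ − M) λ^K| ≤ 1` for every eigenvalue `λ` of
`S`. -/
theorem stmt14 (m : ℕ) (S : Matrix (Fin m) (Fin m) ℂ) (K : ℕ) (M : ℂ) :
    (∀ f : Fin m → ℂ,
      (((1 + M) • S - M • (1 : Matrix (Fin m) (Fin m) ℂ)) * S ^ K).mulVec f
        = (S ^ (K + 1)).mulVec f + M • ((S ^ (K + 1)).mulVec f - (S ^ K).mulVec f)) ∧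
    spectrum ℂ (((1 + M) • S - M • (1 : Matrix (Fin m) (Fin m) ℂ)) * S ^ K)
      = (fun l : ℂ => ((1 + M) * l - M) * l ^ K) '' spectrum ℂ S ∧
    ((∀ μ ∈ spectrum ℂ (((1 + M) • S - M • (1 : Matrix (Fin m) (Fin m) ℂ)) * S ^ K),
        ‖μ‖ ≤ 1)
      ↔ ∀ l ∈ spectrum ℂ S, ‖((1 + M) * l - M) * l ^ K‖ ≤ 1) := by
  have hspec : spectrum ℂ (((1 + M) • S - M • (1 : Matrix (Fin m) (Fin m) ℂ)) * S ^ K)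
      = (fun l : ℂ => ((1 + M) * l - M) * l ^ K) '' spectrum ℂ S := by
    rw [← aeval_projEulerPoly, spectrum.map_polynomial_aeval_of_finiteDimensional]
    simp only [eval_projEulerPoly]
  refine ⟨fun f => ?_, hspec, ?_⟩
  · rw [projEuler_step_eq, Matrix.add_mulVec, Matrix.smul_mulVec, Matrix.sub_mulVec]
  · rw [hspec, Set.forall_mem_image]
end

section
/- Let p ≥ 1 be an integer, v_p = (2p − 1)/(2p) and d_p = (4p² − 1)/(12p²). Let r > 0 and ν > 0, and assume either (ν ≤ 1/4 and r ≤ 1) or r ≤ d_p/ν. Then (v_p·r)³ ≤ d_p·r²/ν; in other words, K = 3 inner steps satisfy the projective-integration stability condition v_p·r ≤ (d_p·r²/ν)^{1/K}. -/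
/-!
With `v = v_p ∈ [0, 1]`, the condition `(v r)³ ≤ d_p r² / ν` reduces, after dividing by `r²/ν`,
to `v³ · rν ≤ d_p`, which follows from `rν ≤ d_p` since `v³ ≤ 1`. The second alternative of the
hypothesis is exactly `rν ≤ d_p`; the first gives `rν ≤ 1/4`, and `1/4 ≤ d_p` because `p ≥ 1`.
-/

noncomputable section

def maxVelocity (p : ℕ) : ℝ := (2 * (p : ℝ) - 1) / (2 * (p : ℝ))

def diffusionCoeff (p : ℕ) : ℝ := (4 * (p : ℝ) ^ 2 - 1) / (12 * (p : ℝ) ^ 2)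

lemma maxVelocity_nonneg (p : ℕ) : 0 ≤ maxVelocity p := by
  rcases Nat.eq_zero_or_pos p with rfl | hp
  · simp [maxVelocity]
  · have hp' : (1 : ℝ) ≤ p := by exact_mod_cast hp
    unfold maxVelocity
    apply div_nonneg <;> linarith

lemma maxVelocity_le_one (p : ℕ) : maxVelocity p ≤ 1 := by
  unfold maxVelocity
  apply div_le_one_of_le₀ <;> linarith [(p.cast_nonneg : (0 : ℝ) ≤ p)]

lemma quarter_le_diffusionCoeff {p : ℕ} (hp : 1 ≤ p) : 1 / 4 ≤ diffusionCoeff p := by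
  have hp' : (1 : ℝ) ≤ p := by exact_mod_cast hp
  unfold diffusionCoeff
  rw [le_div_iff₀ (by positivity)]
  nlinarith

lemma cube_mul_le_of_le_div {v d r ν : ℝ} (hv₀ : 0 ≤ v) (hv₁ : v ≤ 1) (hr : 0 < r)
    (hν : 0 < ν) (h : r ≤ d / ν) : (v * r) ^ 3 ≤ d * r ^ 2 / ν := by
  rw [le_div_iff₀ hν] at h ⊢
  have hv3 : v ^ 3 ≤ 1 := pow_le_one₀ hv₀ hv₁
  calc (v * r) ^ 3 * ν = v ^ 3 * (r * ν) * r ^ 2 := by ring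
    _ ≤ 1 * d * r ^ 2 := by gcongr
    _ = d * r ^ 2 := by ring

end

/-- With `v_p = (2p−1)/(2p)` and `d_p = (4p²−1)/(12p²)`, if `r, ν > 0` and either
(`ν ≤ 1/4` and `r ≤ 1`) or `r ≤ d_p/ν`, then `(v_p r)³ ≤ d_p r²/ν`, i.e. `K = 3` inner
steps satisfy the projective-integration stability condition `v_p r ≤ (d_p r²/ν)^{1/K}`. -/
theorem stmt15 (p : ℕ) (hp : 1 ≤ p) (r ν : ℝ) (hr : 0 < r) (hν : 0 < ν)
    (h : (ν ≤ 1 / 4 ∧ r ≤ 1)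
      ∨ r ≤ ((4 * (p : ℝ) ^ 2 - 1) / (12 * (p : ℝ) ^ 2)) / ν) :
    ((2 * (p : ℝ) - 1) / (2 * (p : ℝ)) * r) ^ 3
      ≤ (4 * (p : ℝ) ^ 2 - 1) / (12 * (p : ℝ) ^ 2) * r ^ 2 / ν := by
  have hrν : r ≤ diffusionCoeff p / ν := by
    rcases h with ⟨hν₄, hr₁⟩ | hd
    · calc r ≤ (1 / 4) / ν := by rw [le_div_iff₀ hν]; nlinarith
        _ ≤ diffusionCoeff p / ν := by gcongr; exact quarter_le_diffusionCoeff hp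
    · exact hd
  exact cube_mul_le_of_le_div (maxVelocity_nonneg p) (maxVelocity_le_one p) hr hν hrν
end

section
/- Let R be a (possibly noncommutative) ring and let P, Φ ∈ R satisfy P·P = P and P·Φ·P = 0. Then for every integer k ≥ 3, the polynomial (C(P) − X·C(Φ))^k ∈ R[X] has: coefficient of X⁰ equal to P; coefficient of X¹ equal to −(P·Φ + Φ·P); and coefficient of X² equal to P·Φ² + Φ²·P + Φ·P·Φ + (k − 3)·(P·Φ²·P). -/
/-!
Write `A = C P - X * C Φ`. Multiplying by `A` on the right acts on coefficients by
`c₀ ↦ c₀ P` and `cₙ₊₁ ↦ cₙ₊₁ P - cₙ Φ`. Since `P` is idempotent the constant term stays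
`P`; from `k = 2` on, `PΦP = 0` makes the linear coefficient `-(PΦ + ΦP)` a fixed point of its
recursion, and then each further factor adds exactly one copy of `PΦ²P` to the quadratic
coefficient.
-/

namespace Polynomial

variable {R : Type*} [Ring R]

theorem coeff_mul_C_sub_X_mul_C_succ (p : R[X]) (a b : R) (n : ℕ) :
    (p * (C a - X * C b)).coeff (n + 1) = p.coeff (n + 1) * a - p.coeff n * b := by
  rw [mul_sub, X_mul, ← mul_assoc, coeff_sub, coeff_mul_X, coeff_mul_C, coeff_mul_C]

theorem coeff_two_C_sub_X_mul_C_sq (a b : R) : ((C a - X * C b) ^ 2).coeff 2 = b ^ 2 := by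
  rw [sq, coeff_mul_C_sub_X_mul_C_succ]
  simp [coeff_C, sq]

variable {P Φ : R}

theorem coeff_zero_C_sub_X_mul_C_pow (hP : IsIdempotentElem P) {k : ℕ} (hk : k ≠ 0) :
    ((C P - X * C Φ) ^ k).coeff 0 = P := by
  rw [← constantCoeff_apply, map_pow]
  simpa using hP.pow_eq hk

theorem coeff_one_C_sub_X_mul_C_pow (hP : IsIdempotentElem P) (hPΦP : P * Φ * P = 0)
    {k : ℕ} (hk : 2 ≤ k) : ((C P - X * C Φ) ^ k).coeff 1 = -(P * Φ + Φ * P) := by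
  induction k, hk using Nat.le_induction with
  | base =>
    rw [sq, coeff_mul_C_sub_X_mul_C_succ]
    simp [coeff_C]
    abel
  | succ k hk ih =>
    rw [pow_succ, coeff_mul_C_sub_X_mul_C_succ, ih, coeff_zero_C_sub_X_mul_C_pow hP (by omega),
      neg_mul, add_mul, hPΦP, mul_assoc Φ, hP.eq]
    abel

theorem coeff_two_C_sub_X_mul_C_pow (hP : IsIdempotentElem P) (hPΦP : P * Φ * P = 0)
    {k : ℕ} (hk : 3 ≤ k) : ((C P - X * C Φ) ^ k).coeff 2
      = P * Φ ^ 2 + Φ ^ 2 * P + Φ * P * Φ + (k - 3) • (P * Φ ^ 2 * P) := by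
  induction k, hk using Nat.le_induction with
  | base =>
    rw [pow_succ, coeff_mul_C_sub_X_mul_C_succ, coeff_two_C_sub_X_mul_C_sq,
      coeff_one_C_sub_X_mul_C_pow hP hPΦP le_rfl]
    simp only [Nat.sub_self, zero_smul, add_zero]
    noncomm_ring
  | succ k hk ih =>
    have hΦPΦP : Φ * P * Φ * P = 0 := by rw [mul_assoc Φ P Φ, mul_assoc Φ, hPΦP, mul_zero]
    rw [pow_succ, coeff_mul_C_sub_X_mul_C_succ, ih,
      coeff_one_C_sub_X_mul_C_pow hP hPΦP (by omega),
      show k + 1 - 3 = k - 3 + 1 by omega, succ_nsmul]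
    simp only [add_mul, smul_mul_assoc, hΦPΦP, mul_assoc _ P P, hP.eq]
    noncomm_ring

end Polynomial

open Polynomial in
/-- If `P` is idempotent and `PΦP = 0` in a ring `R`, then for `k ≥ 3` the polynomial
`(P − XΦ)^k ∈ R[X]` has coefficient `P` in degree 0, `−(PΦ + ΦP)` in degree 1, and
`PΦ² + Φ²P + ΦPΦ + (k−3)·(PΦ²P)` in degree 2. -/
theorem stmt17 (R : Type*) [Ring R] (P Φ : R) (hP : P * P = P) (hPΦP : P * Φ * P = 0)
    (k : ℕ) (hk : 3 ≤ k) :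
    ((C P - X * C Φ) ^ k).coeff 0 = P ∧
    ((C P - X * C Φ) ^ k).coeff 1 = -(P * Φ + Φ * P) ∧
    ((C P - X * C Φ) ^ k).coeff 2
      = P * Φ ^ 2 + Φ ^ 2 * P + Φ * P * Φ + (k - 3) • (P * Φ ^ 2 * P) :=
  ⟨coeff_zero_C_sub_X_mul_C_pow hP (by omega), coeff_one_C_sub_X_mul_C_pow hP hPΦP (by omega),
    coeff_two_C_sub_X_mul_C_pow hP hPΦP hk⟩
end
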